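/- arXiv:2102.00152 — 2 statements merged into one kernel-verified Lean document; each statement's English description precedes it below -/
import Mathlib

section
/- Let M be a nonempty set of beliefs on a nonempty finite set S, let u : X → ℝ, let ≿* be the unanimity preference represented by (u, M), and let A ⊆ S satisfy μ(A) > 0 for every μ ∈ M. Define f ⊵_A g iff fAh ≿* gAh for some act h. Then for all acts f, g: f ⊵_A g if and only if ∑_{s∈S} u(f(s))π(s) ≥ ∑_{s∈S} u(g(s))π(s) for every π ∈ B(M,A) = {B(μ,A) : μ ∈ M}. (Lemma 3: the derived conditional relation admits the multi-prior expected utility representation (u, B(M,A)).) -/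
open Finset

noncomputable def bayes {S : Type*} [DecidableEq S] (μ : S → ℝ) (A : Finset S) : S → ℝ :=
  fun s => if s ∈ A then μ s / ∑ t ∈ A, μ t else 0

def splice {S X : Type*} [DecidableEq S] (f g : S → X) (A : Finset S) : S → X :=
  fun s => if s ∈ A then f s else g s

section

variable {S X : Type*} [Fintype S] [DecidableEq S]

theorem sum_splice_mul (u : X → ℝ) (f h : S → X) (A : Finset S) (μ : S → ℝ) :
    ∑ s, u (splice f h A s) * μ s
      = ∑ s ∈ A, u (f s) * μ s + ∑ s ∈ Aᶜ, u (h s) * μ s := by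
  simp only [splice, apply_ite u, ite_mul]
  rw [sum_ite, filter_univ_mem, ← compl_filter, filter_univ_mem]

theorem sum_mul_bayes (u : X → ℝ) (f : S → X) (A : Finset S) (μ : S → ℝ) :
    ∑ s, u (f s) * bayes μ A s = (∑ s ∈ A, u (f s) * μ s) / ∑ t ∈ A, μ t := by
  simp only [bayes, mul_ite, mul_zero, Fintype.sum_ite_mem, sum_div, mul_div_assoc]

theorem sum_splice_mul_le_iff (u : X → ℝ) (f g h : S → X) (A : Finset S) (μ : S → ℝ) :
    ∑ s, u (splice g h A s) * μ s ≤ ∑ s, u (splice f h A s) * μ s ↔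
      ∑ s ∈ A, u (g s) * μ s ≤ ∑ s ∈ A, u (f s) * μ s := by
  rw [sum_splice_mul, sum_splice_mul, add_le_add_iff_right]

theorem sum_mul_bayes_le_iff (u : X → ℝ) (f g : S → X) {A : Finset S} {μ : S → ℝ}
    (hA : 0 < ∑ s ∈ A, μ s) :
    ∑ s, u (g s) * bayes μ A s ≤ ∑ s, u (f s) * bayes μ A s ↔
      ∑ s ∈ A, u (g s) * μ s ≤ ∑ s ∈ A, u (f s) * μ s := by
  rw [sum_mul_bayes, sum_mul_bayes, div_le_div_iff_of_pos_right hA]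

end

theorem stmt5_general {S X : Type*} [Fintype S] [DecidableEq S]
    (M : Set (S → ℝ))
    (u : X → ℝ)
    (A : Finset S) (hA : ∀ μ ∈ M, 0 < ∑ s ∈ A, μ s)
    (f g : S → X) :
    (∃ h : S → X, ∀ μ ∈ M,
      ∑ s, u (splice f h A s) * μ s ≥ ∑ s, u (splice g h A s) * μ s) ↔
    (∀ π ∈ (fun μ => bayes μ A) '' M,
      ∑ s, u (f s) * π s ≥ ∑ s, u (g s) * π s) := by
  constructor
  · rintro ⟨h, hh⟩ π ⟨μ, hμ, rfl⟩
    exact (sum_mul_bayes_le_iff u f g (hA μ hμ)).2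
      ((sum_splice_mul_le_iff u f g h A μ).1 (hh μ hμ))
  · intro hπ
    -- the comparison on `A` does not depend on the common continuation, so any `h` works
    refine ⟨f, fun μ hμ => (sum_splice_mul_le_iff u f g f A μ).2 ?_⟩
    exact (sum_mul_bayes_le_iff u f g (hA μ hμ)).1 (hπ _ ⟨μ, hμ, rfl⟩)

/-- Lemma 3: the derived conditional relation admits the multi-prior expected
utility representation (u, B(M,A)). -/
theorem stmt5 {S X : Type*} [Fintype S] [DecidableEq S] [Nonempty S]
    (M : Set (S → ℝ)) (hM : M.Nonempty)
    (hMb : ∀ μ ∈ M, (∀ s, 0 ≤ μ s) ∧ ∑ s, μ s = 1)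
    (u : X → ℝ)
    (A : Finset S) (hA : ∀ μ ∈ M, 0 < ∑ s ∈ A, μ s)
    (f g : S → X) :
    (∃ h : S → X, ∀ μ ∈ M,
      ∑ s, u (splice f h A s) * μ s ≥ ∑ s, u (splice g h A s) * μ s) ↔
    (∀ π ∈ (fun μ => bayes μ A) '' M,
      ∑ s, u (f s) * π s ≥ ∑ s, u (g s) * π s) :=
  stmt5_general M u A hA f g
end

section
/- Let μ be a belief on a nonempty finite set S, let u : X → ℝ with [−1,1] contained in the range of u, let A, B, C be events with μ(A) > 0, μ(B) > 0, μ(C) > 0 and C ∩ (A ∪ B) = ∅, let δ_A, δ_B ∈ [0,1], and set μ_A = δ_A·μ + (1−δ_A)·B(μ,A) and μ_B = δ_B·μ + (1−δ_B)·B(μ,B). Then for all x, y ∈ X with −1 ≤ u(y) < u(x) ≤ 1, the following are equivalent: (i) for every z ∈ X, ∑_{s∈S} u((xCy)(s))μ_B(s) ≥ u(z) implies ∑_{s∈S} u((xCy)(s))μ_A(s) ≥ u(z); (ii) δ_A ≥ δ_B. (The agent is weakly more willing to bet on the disjoint event C after A than after B exactly when her conservatism weight at A is at least her weight at B; this is the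 content of Proposition 2.) -/
/-! Since C is disjoint from A and B, both Bayesian updates give C probability zero, so the
mixed belief with weight δ gives C probability δ μ(C) and the bet xCy has expected utility
u(y) + δ μ(C) (u(x) - u(y)), strictly increasing in δ. Comparing the two bets against every
certain consequence z is the same as comparing their expected utilities, because the expected
utility under the belief after B is itself in [-1, 1] and hence the utility of some z. -/

open Finset

section Beliefs

variable {S : Type*} [DecidableEq S]

lemma sum_bayes_of_disjoint (μ : S → ℝ) {A C : Finset S} (h : Disjoint C A) :
    ∑ s ∈ C, bayes μ A s = 0 :=
  Finset.sum_eq_zero fun _ hs => if_neg (Finset.disjoint_left.1 h hs)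

variable [Fintype S]

lemma sum_bayes (μ : S → ℝ) {A : Finset S} (hA : 0 < ∑ s ∈ A, μ s) :
    ∑ s, bayes μ A s = 1 := by
  simp only [bayes]
  rw [Finset.sum_ite_mem, Finset.univ_inter, ← Finset.sum_div, div_self hA.ne']

lemma sum_splice_const_mul {X : Type*} (u : X → ℝ) (x y : X) (C : Finset S) (ν : S → ℝ) :
    ∑ s, u (splice (fun _ => x) (fun _ => y) C s) * ν s
      = u y * ∑ s, ν s + (u x - u y) * ∑ s ∈ C, ν s := by
  have hpoint : ∀ s, u (splice (fun _ => x) (fun _ => y) C s) * ν s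
      = u y * ν s + if s ∈ C then (u x - u y) * ν s else 0 := by
    intro s
    by_cases hs : s ∈ C <;> simp only [splice, hs, if_true, if_false] <;> ring
  simp only [hpoint, Finset.sum_add_distrib, Finset.sum_ite_mem, Finset.univ_inter,
    ← Finset.mul_sum]

lemma sum_splice_mul_mix_bayes {X : Type*} (u : X → ℝ) (x y : X) {μ : S → ℝ}
    (hμ1 : ∑ s, μ s = 1) {C D : Finset S} (hD : 0 < ∑ s ∈ D, μ s) (hCD : Disjoint C D)
    (δ : ℝ) :
    ∑ s, u (splice (fun _ => x) (fun _ => y) C s) * (δ * μ s + (1 - δ) * bayes μ D s)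
      = u y + δ * ((∑ s ∈ C, μ s) * (u x - u y)) := by
  rw [sum_splice_const_mul, Finset.sum_add_distrib, Finset.sum_add_distrib, ← Finset.mul_sum,
    ← Finset.mul_sum, ← Finset.mul_sum, ← Finset.mul_sum, sum_bayes μ hD,
    sum_bayes_of_disjoint μ hCD, hμ1]
  ring

end Beliefs

lemma forall_le_imp_le_iff_of_mem_range {X : Type*} {u : X → ℝ} {a b : ℝ}
    (hb : b ∈ Set.range u) : (∀ z, u z ≤ b → u z ≤ a) ↔ b ≤ a := by
  obtain ⟨z, rfl⟩ := hb
  exact ⟨fun h => h z le_rfl, fun h _ hz => hz.trans h⟩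

lemma add_mul_sub_mem_Icc {a b t : ℝ} (ht : t ∈ Set.Icc (0 : ℝ) 1) (hab : a ≤ b) :
    a + t * (b - a) ∈ Set.Icc a b := by
  constructor <;> nlinarith [ht.1, ht.2]

theorem stmt11_general {S X : Type*} [Fintype S] [DecidableEq S]
    (μ : S → ℝ) (hμ0 : ∀ s, 0 ≤ μ s) (hμ1 : ∑ s, μ s = 1)
    (u : X → ℝ) (hu : Set.Icc (-1:ℝ) 1 ⊆ Set.range u)
    (A B C : Finset S)
    (hA : 0 < ∑ s ∈ A, μ s) (hB : 0 < ∑ s ∈ B, μ s) (hC : 0 < ∑ s ∈ C, μ s)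
    (hdisj : C ∩ (A ∪ B) = ∅)
    (δA δB : ℝ) (hδB : δB ∈ Set.Icc (0:ℝ) 1) :
    ∀ x y : X, -1 ≤ u y → u y < u x → u x ≤ 1 →
      ((∀ z : X,
          ∑ s, u (splice (fun _ => x) (fun _ => y) C s) *
            (δB * μ s + (1 - δB) * bayes μ B s) ≥ u z →
          ∑ s, u (splice (fun _ => x) (fun _ => y) C s) *
            (δA * μ s + (1 - δA) * bayes μ A s) ≥ u z) ↔
        δA ≥ δB) := by
  intro x y hy hyx hx
  obtain ⟨hCA, hCB⟩ :=
    Finset.disjoint_union_right.1 (Finset.disjoint_iff_inter_eq_empty.2 hdisj)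
  rw [sum_splice_mul_mix_bayes u x y hμ1 hA hCA, sum_splice_mul_mix_bayes u x y hμ1 hB hCB]
  have hC1 : ∑ s ∈ C, μ s ≤ 1 := hμ1 ▸ Finset.sum_le_univ_sum_of_nonneg fun s => hμ0 s
  have hδC : δB * ∑ s ∈ C, μ s ∈ Set.Icc (0 : ℝ) 1 :=
    ⟨mul_nonneg hδB.1 hC.le, mul_le_one₀ hδB.2 hC.le hC1⟩
  have hvalB : u y + δB * ((∑ s ∈ C, μ s) * (u x - u y)) ∈ Set.range u := by
    refine hu (Set.Icc_subset_Icc hy hx ?_)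
    simpa only [mul_assoc] using add_mul_sub_mem_Icc hδC hyx.le
  refine (forall_le_imp_le_iff_of_mem_range hvalB).trans ?_
  rw [add_le_add_iff_left, mul_le_mul_iff_left₀ (mul_pos hC (sub_pos.2 hyx))]

/-- Proposition 2 (content): the agent is weakly more willing to bet on the
disjoint event C after A than after B exactly when δ_A ≥ δ_B. -/
theorem stmt11 {S X : Type*} [Fintype S] [DecidableEq S] [Nonempty S]
    (μ : S → ℝ) (hμ0 : ∀ s, 0 ≤ μ s) (hμ1 : ∑ s, μ s = 1)
    (u : X → ℝ) (hu : Set.Icc (-1:ℝ) 1 ⊆ Set.range u)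
    (A B C : Finset S)
    (hA : 0 < ∑ s ∈ A, μ s) (hB : 0 < ∑ s ∈ B, μ s) (hC : 0 < ∑ s ∈ C, μ s)
    (hdisj : C ∩ (A ∪ B) = ∅)
    (δA δB : ℝ) (hδA : δA ∈ Set.Icc (0:ℝ) 1) (hδB : δB ∈ Set.Icc (0:ℝ) 1) :
    ∀ x y : X, -1 ≤ u y → u y < u x → u x ≤ 1 →
      ((∀ z : X,
          ∑ s, u (splice (fun _ => x) (fun _ => y) C s) *
            (δB * μ s + (1 - δB) * bayes μ B s) ≥ u z →
          ∑ s, u (splice (fun _ => x) (fun _ => y) C s) *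
            (δA * μ s + (1 - δA) * bayes μ A s) ≥ u z) ↔
        δA ≥ δB) :=
  stmt11_general μ hμ0 hμ1 u hu A B C hA hB hC hdisj δA δB hδB
end
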